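/- arXiv:0704.3952 — 4 statements merged into one kernel-verified Lean document; each statement's English description precedes it below -/
import Mathlib

section
/- Let p be a real polynomial of degree d > 1 whose Julia set J(p) is contained in ℝ. Then with a = min J(p) and b = max J(p), every preimage under p of a point of [a,b] that lies in ℂ actually lies in [a,b]; equivalently, p⁻¹([a,b]) ⊆ [a,b]. -/
/-!
The filled Julia set `K` of `p` is compact, and a compact subset of `ℂ` whose frontier is real is
itself real (the extreme values of `Im` on it are attained on the frontier). Hence `K` has empty
interior and `J = ∂K = K`; as `K` is backward invariant, every preimage of `a` or `b` lies in `J`,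
so in `[a, b]`.

It remains to see that a polynomial `f` with `f⁻¹{a, b} ⊆ [a, b]` satisfies
`f⁻¹[a, b] ⊆ [a, b]`. Suppose `f z = c` with `a < c < b` and `z ∉ [a, b]`. For `t ∈ {a, b}`,
`f' / (f - t) = ∑ 1 / (z - r)` over the roots `r ∈ [a, b]` of `f - t`, and all the numbers
`1 / (z - r)` lie in one open half-plane. So `f'(z) / (c - a)` and `f'(z) / (c - b)` lie in the
same open half-plane, which is impossible since `c - a` and `c - b` have opposite signs.
-/

open Polynomial Bornology Filter Set Complex

/-- The filled Julia set of a polynomial: points with bounded forward orbit. -/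
def filledJuliaSet (p : Polynomial ℂ) : Set ℂ :=
  {z | Bornology.IsBounded (Set.range fun n => (fun w => p.eval w)^[n] z)}

/-- The Julia set of a polynomial, as the boundary of the filled Julia set. -/
def juliaSet (p : Polynomial ℂ) : Set ℂ := frontier (filledJuliaSet p)

section Escape

variable {E : Type*} [SeminormedAddGroup E] {g : E → E} {R : ℝ}

theorem two_pow_mul_norm_le_norm_iterate (hg : ∀ w, R < ‖w‖ → 2 * ‖w‖ ≤ ‖g w‖) {w : E}
    (hw : R < ‖w‖) (k : ℕ) : 2 ^ k * ‖w‖ ≤ ‖g^[k] w‖ := by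
  induction k with
  | zero => simp
  | succ k ih =>
    have hk : R < ‖g^[k] w‖ :=
      hw.trans_le <| (le_mul_of_one_le_left (norm_nonneg w) (one_le_pow₀ one_le_two)).trans ih
    rw [Function.iterate_succ_apply', pow_succ']
    calc 2 * 2 ^ k * ‖w‖ ≤ 2 * ‖g^[k] w‖ := by rw [mul_assoc]; gcongr
      _ ≤ ‖g (g^[k] w)‖ := hg _ hk

theorem isBounded_range_iterate_iff (hR : 0 ≤ R) (hg : ∀ w, R < ‖w‖ → 2 * ‖w‖ ≤ ‖g w‖)
    (z : E) : IsBounded (range fun n => g^[n] z) ↔ ∀ n, ‖g^[n] z‖ ≤ R := by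
  refine ⟨fun hbdd n => ?_,
    fun h => isBounded_iff_forall_norm_le.mpr ⟨R, by rintro _ ⟨n, rfl⟩; exact h n⟩⟩
  by_contra! hn
  obtain ⟨C, hC⟩ := isBounded_iff_forall_norm_le.mp hbdd
  have hpos : 0 < ‖g^[n] z‖ := hR.trans_lt hn
  obtain ⟨k, hk⟩ := pow_unbounded_of_one_lt (C / ‖g^[n] z‖) one_lt_two
  have hesc := two_pow_mul_norm_le_norm_iterate hg hn k
  rw [← Function.iterate_add_apply] at hesc
  rw [div_lt_iff₀ hpos] at hk
  linarith [hC _ ⟨k + n, rfl⟩]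

end Escape

theorem Polynomial.exists_two_mul_norm_le_norm_eval {𝕜 : Type*} [NormedField 𝕜] (P : 𝕜[X])
    (hd : 1 < P.natDegree) : ∃ R, 0 ≤ R ∧ ∀ w : 𝕜, R < ‖w‖ → 2 * ‖w‖ ≤ ‖P.eval w‖ := by
  have hdivX : 0 < P.divX.degree := by
    rw [← natDegree_pos_iff_degree_pos, natDegree_divX_eq_natDegree_tsub_one]
    omega
  have hlarge : ∀ᶠ w in cobounded 𝕜, 3 ≤ ‖P.divX.eval w‖ ∧ ‖P.coeff 0‖ ≤ ‖w‖ :=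
    ((P.divX.tendsto_norm_atTop hdivX tendsto_norm_cobounded_atTop).eventually_ge_atTop 3).and
      (eventually_cobounded_le_norm _)
  obtain ⟨R, -, hR⟩ := (Metric.hasBasis_cobounded_compl_closedBall 0).eventually_iff.mp hlarge
  refine ⟨max R 0, le_max_right _ _, fun w hw => ?_⟩
  obtain ⟨hdiv, hcoeff⟩ := hR (by simpa using (le_max_left R 0).trans_lt hw)
  calc 2 * ‖w‖ ≤ ‖P.divX.eval w‖ * ‖w‖ - ‖P.coeff 0‖ := by nlinarith [norm_nonneg w]
    _ ≤ ‖P.divX.eval w * w + P.coeff 0‖ := by rw [← norm_mul]; exact norm_sub_le_norm_add _ _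
    _ = ‖P.eval w‖ := by
        conv_rhs => rw [← divX_mul_X_add P]
        simp

theorem isCompact_filledJuliaSet {P : ℂ[X]} (hd : 1 < P.natDegree) :
    IsCompact (filledJuliaSet P) := by
  obtain ⟨R, hR, hg⟩ := P.exists_two_mul_norm_le_norm_eval hd
  have hK : filledJuliaSet P = ⋂ n, (fun w => P.eval w)^[n] ⁻¹' Metric.closedBall 0 R := by
    ext z
    simp [filledJuliaSet, isBounded_range_iterate_iff hR hg]
  rw [hK]
  exact Metric.isCompact_of_isClosed_isBounded
    (isClosed_iInter fun n => Metric.isClosed_closedBall.preimage (P.continuous.iterate n))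
    (Metric.isBounded_closedBall.subset (iInter_subset_of_subset 0 subset_rfl))

theorem mem_filledJuliaSet_of_eval_mem {P : ℂ[X]} {z : ℂ} (h : P.eval z ∈ filledJuliaSet P) :
    z ∈ filledJuliaSet P := by
  refine (IsBounded.insert (s := range fun n => (fun w => P.eval w)^[n] (P.eval z)) h z).subset ?_
  rintro _ ⟨_ | n, rfl⟩
  · exact mem_insert _ _
  · exact mem_insert_of_mem _ ⟨n, (Function.iterate_succ_apply _ n z).symm⟩

section RealFrontier

variable {K : Set ℂ}

theorem mem_frontier_of_isMaxOn_im {z : ℂ} (hz : z ∈ K) (hmax : IsMaxOn im K z) :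
    z ∈ frontier K := by
  refine ⟨subset_closure hz, fun hint => ?_⟩
  have := interior_mono (t := {w : ℂ | w.im ≤ z.im}) (fun w hw => isMaxOn_iff.mp hmax w hw) hint
  rw [interior_setOfPred_im_le] at this
  exact lt_irrefl z.im this

theorem mem_frontier_of_isMinOn_im {z : ℂ} (hz : z ∈ K) (hmin : IsMinOn im K z) :
    z ∈ frontier K := by
  refine ⟨subset_closure hz, fun hint => ?_⟩
  have := interior_mono (t := {w : ℂ | z.im ≤ w.im}) (fun w hw => isMinOn_iff.mp hmin w hw) hint
  rw [interior_setOfPred_le_im] at this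
  exact lt_irrefl z.im this

theorem IsCompact.im_eq_zero_of_frontier (hK : IsCompact K)
    (hfr : ∀ z ∈ frontier K, z.im = 0) {z : ℂ} (hz : z ∈ K) : z.im = 0 := by
  obtain ⟨zmax, hzmax, hmax⟩ := hK.exists_isMaxOn ⟨z, hz⟩ continuous_im.continuousOn
  obtain ⟨zmin, hzmin, hmin⟩ := hK.exists_isMinOn ⟨z, hz⟩ continuous_im.continuousOn
  have h₁ := hfr _ (mem_frontier_of_isMaxOn_im hzmax hmax)
  have h₂ := hfr _ (mem_frontier_of_isMinOn_im hzmin hmin)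
  linarith [isMaxOn_iff.mp hmax z hz, isMinOn_iff.mp hmin z hz]

theorem IsCompact.frontier_eq_self_of_frontier_im_eq_zero (hK : IsCompact K)
    (hfr : ∀ z ∈ frontier K, z.im = 0) : frontier K = K := by
  have hreal : ∀ w ∈ K, w.im = 0 := fun w hw => hK.im_eq_zero_of_frontier hfr hw
  have hint : interior K = ∅ := by
    refine eq_empty_of_forall_notMem fun z hz => ?_
    have h₁ := interior_mono (t := {w : ℂ | w.im ≤ 0}) (fun w hw => (hreal w hw).le) hz
    have h₂ := interior_mono (t := {w : ℂ | 0 ≤ w.im}) (fun w hw => (hreal w hw).ge) hz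
    rw [interior_setOfPred_im_le] at h₁
    rw [interior_setOfPred_le_im] at h₂
    exact lt_asymm (show z.im < 0 from h₁) h₂
  rw [hK.isClosed.frontier_eq, hint, sdiff_empty]

end RealFrontier

theorem juliaSet_eq_filledJuliaSet {P : ℂ[X]} (hd : 1 < P.natDegree)
    (hJ : ∀ z ∈ juliaSet P, z.im = 0) : juliaSet P = filledJuliaSet P :=
  (isCompact_filledJuliaSet hd).frontier_eq_self_of_frontier_im_eq_zero hJ

theorem exists_linearMap_pos_inv_sub {a b : ℝ} {z : ℂ} (hz : z ∉ ofReal '' Icc a b) :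
    ∃ ℓ : ℂ →ₗ[ℝ] ℝ, ∀ t ∈ Icc a b, 0 < ℓ (z - t)⁻¹ := by
  by_cases him : z.im = 0
  · have hre : z.re < a ∨ b < z.re := by
      by_contra! h
      exact hz ⟨z.re, h, Complex.ext rfl him.symm⟩
    refine ⟨(z.re - a) • reLm, fun t ⟨hat, htb⟩ => ?_⟩
    have hzt : z - t = ((z.re - t : ℝ) : ℂ) := Complex.ext (by simp) (by simp [him])
    rw [hzt, ← ofReal_inv]
    simp only [LinearMap.smul_apply, reLm_coe, ofReal_re, smul_eq_mul]
    rcases hre with h | h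
    · exact mul_pos_of_neg_of_neg (by linarith) (inv_lt_zero.mpr (by linarith))
    · exact mul_pos (by linarith) (inv_pos.mpr (by linarith))
  · refine ⟨-z.im • imLm, fun t _ => ?_⟩
    have hzt : z - t ≠ 0 := fun h => him (by simpa using congr_arg im h)
    simp only [LinearMap.smul_apply, imLm_coe, inv_im, sub_im, ofReal_im, sub_zero, smul_eq_mul]
    rw [mul_div_assoc', neg_mul_neg, ← sq]
    exact div_pos (pow_two_pos_of_ne_zero him) (normSq_pos.mpr hzt)

theorem Polynomial.Splits.pos_map_eval_derivative_div_eval {F : Type*} [Field F] {f : F[X]}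
    (hf : f.Splits) (hroots : f.roots ≠ 0) (ℓ : F →+ ℝ) {z : F} (hz : f.eval z ≠ 0)
    (hℓ : ∀ r ∈ f.roots, 0 < ℓ (z - r)⁻¹) : 0 < ℓ (f.derivative.eval z / f.eval z) := by
  rw [hf.eval_derivative_div_eval_of_ne_zero hz, map_multiset_sum, Multiset.map_map]
  simpa using Multiset.sum_lt_sum_of_nonempty (f := fun _ => (0 : ℝ)) hroots
    (fun r hr => by simpa using hℓ r hr)

theorem Polynomial.pos_sub_mul_map_eval_derivative (f : ℂ[X]) (hf : 0 < f.natDegree)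
    (ℓ : ℂ →ₗ[ℝ] ℝ) {z : ℂ} {c t : ℝ} (hzc : f.eval z = c) (hct : c ≠ t)
    (hℓ : ∀ w, f.eval w = t → 0 < ℓ (z - w)⁻¹) : 0 < (c - t) * ℓ (f.derivative.eval z) := by
  have hsub : c - t ≠ 0 := sub_ne_zero.mpr hct
  have hroots : (f - C (t : ℂ)).roots ≠ 0 := by
    rw [Ne, IsAlgClosed.roots_eq_zero_iff_natDegree_eq_zero, natDegree_sub_C]
    exact hf.ne'
  have hpos := (IsAlgClosed.splits (f - C (t : ℂ))).pos_map_eval_derivative_div_eval hroots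
    ℓ.toAddMonoidHom (z := z) (by simp [hzc, ← ofReal_sub, hsub])
    (fun r hr => hℓ r (by simpa [sub_eq_zero] using (mem_roots'.mp hr).2))
  have hscale : (f - C (t : ℂ)).derivative.eval z / (f - C (t : ℂ)).eval z =
      (c - t)⁻¹ • f.derivative.eval z := by
    simp [hzc, Complex.real_smul, div_eq_inv_mul]
  rw [hscale, LinearMap.toAddMonoidHom_coe, map_smul, smul_eq_mul] at hpos
  have hsq : (c - t) * ℓ (f.derivative.eval z) =
      (c - t) ^ 2 * ((c - t)⁻¹ * ℓ (f.derivative.eval z)) := by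
    field_simp
  rw [hsq]
  exact mul_pos (pow_two_pos_of_ne_zero hsub) hpos

theorem Polynomial.mem_ofReal_image_Icc_of_eval_mem (f : ℂ[X]) (hf : 0 < f.natDegree)
    {a b : ℝ} (ha : ∀ w, f.eval w = a → w ∈ ofReal '' Icc a b)
    (hb : ∀ w, f.eval w = b → w ∈ ofReal '' Icc a b) {z : ℂ}
    (hz : f.eval z ∈ ofReal '' Icc a b) : z ∈ ofReal '' Icc a b := by
  obtain ⟨c, ⟨hac, hcb⟩, hcz⟩ := hz
  rcases hac.eq_or_lt with rfl | hac
  · exact ha z hcz.symm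
  rcases hcb.eq_or_lt with rfl | hcb
  · exact hb z hcz.symm
  by_contra hzI
  obtain ⟨ℓ, hℓ⟩ := exists_linearMap_pos_inv_sub hzI
  have hpos : ∀ t : ℝ, (∀ w, f.eval w = t → w ∈ ofReal '' Icc a b) → c ≠ t →
      0 < (c - t) * ℓ (f.derivative.eval z) := fun t ht hct =>
    f.pos_sub_mul_map_eval_derivative hf ℓ hcz.symm hct fun w hw => by
      obtain ⟨s, hs, rfl⟩ := ht w hw
      exact hℓ s hs
  nlinarith [hpos a ha hac.ne', hpos b hb hcb.ne]

/-- If the Julia set of a real polynomial of degree `> 1` is real, then with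
`a = min J(p)`, `b = max J(p)`, every complex preimage under `p` of a point of
`[a,b]` lies in `[a,b]`. -/
theorem stmt_7 (p : Polynomial ℝ) (hd : 1 < p.natDegree)
    (hJ : ∀ z ∈ juliaSet (p.map (algebraMap ℝ ℂ)), z.im = 0)
    (a b : ℝ)
    (ha : IsLeast {x : ℝ | (x : ℂ) ∈ juliaSet (p.map (algebraMap ℝ ℂ))} a)
    (hb : IsGreatest {x : ℝ | (x : ℂ) ∈ juliaSet (p.map (algebraMap ℝ ℂ))} b) :
    ∀ z : ℂ, (p.map (algebraMap ℝ ℂ)).eval z ∈ (fun x : ℝ => (x : ℂ)) '' Set.Icc a b →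
      z ∈ (fun x : ℝ => (x : ℂ)) '' Set.Icc a b := by
  set P := p.map (algebraMap ℝ ℂ)
  have hdP : 1 < P.natDegree := by rwa [natDegree_map]
  have hJK := juliaSet_eq_filledJuliaSet hdP hJ
  have hpre : ∀ t : ℝ, (t : ℂ) ∈ juliaSet P → ∀ w, P.eval w = t → w ∈ ofReal '' Icc a b := by
    intro t ht w hw
    have hwJ : w ∈ juliaSet P := by
      rw [hJK] at ht ⊢
      exact mem_filledJuliaSet_of_eval_mem (hw ▸ ht)
    have hw_real : ((w.re : ℝ) : ℂ) = w := Complex.ext rfl (hJ w hwJ).symm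
    have hre : w.re ∈ {x : ℝ | (x : ℂ) ∈ juliaSet P} := by rwa [mem_ofPred_eq, hw_real]
    exact ⟨w.re, ⟨ha.2 hre, hb.2 hre⟩, hw_real⟩
  exact fun z => P.mem_ofReal_image_Icc_of_eval_mem (by omega) (hpre a ha.1) (hpre b hb.1)
end

section
/- Let p be a real polynomial of degree d > 1. If there exists a nondegenerate interval [a,b] ⊆ ℝ such that every complex preimage under p of a point of [a,b] lies in [a,b], then the Julia set of p is contained in ℝ. -/
/-!
The Joukowski map `ψ w = (a + b) / 2 + (b - a) / 4 * (w + w⁻¹)` maps the exterior of the unit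
disk conformally onto `ℂ \ [a, b]`; let `φ` be its inverse. The hypothesis says that `p` maps
`ℂ \ [a, b]` into itself, so `F = φ ∘ p ∘ ψ` maps the exterior of the disk into itself, and `F w`
grows faster than `w` at infinity because `deg p ≥ 2`. In the coordinate `u = 1 / w`, the Schwarz
lemma to second order then gives `‖φ z‖ ^ 2 ≤ ‖φ (p z)‖`, so `‖φ‖` grows doubly exponentially
along the orbit of any `z ∉ [a, b]`, which therefore escapes to infinity. Hence the filled Julia
set lies in the closed set `[a, b]`, and so does its boundary.
-/

open Complex Set Metric Filter Function Topology Polynomial Asymptotics Bornology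
open scoped ComplexConjugate

theorem sq_norm_le_norm_of_mapsTo_exterior {F : ℂ → ℂ}
    (hd : DifferentiableOn ℂ F {w | 1 < ‖w‖}) (hmaps : MapsTo F {w | 1 < ‖w‖} {w | 1 < ‖w‖})
    (hF : (fun w ↦ w) =o[cobounded ℂ] F) {w : ℂ} (hw : 1 < ‖w‖) : ‖w‖ ^ 2 ≤ ‖F w‖ := by
  set G : ℂ → ℂ := update (fun u ↦ (F u⁻¹)⁻¹) 0 0
  have hG : ∀ u ≠ 0, G u = (F u⁻¹)⁻¹ := fun u hu ↦ update_of_ne hu _ _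
  have hG0 : G 0 = 0 := update_self ..
  have hGo : G =o[𝓝 0] fun u ↦ u := by
    have h := (hF.comp_tendsto tendsto_inv₀_nhdsNE_zero).inv_rev
      (eventually_mem_nhdsWithin.mono fun u hu h0 ↦ absurd (inv_eq_zero.1 h0) hu)
    rw [← nhdsNE_sup_pure]
    refine IsLittleO.sup (h.congr' ?_ ?_) (isLittleO_pure.2 hG0)
    · filter_upwards [self_mem_nhdsWithin] with u hu using (hG u hu).symm
    · exact Eventually.of_forall fun u ↦ inv_inv u
  have one_lt_norm_inv : ∀ u ∈ ball (0 : ℂ) 1, u ≠ 0 → 1 < ‖u⁻¹‖ := fun u hu hu0 ↦ by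
    simpa [norm_inv, one_lt_inv_iff₀, hu0] using mem_ball_zero_iff.1 hu
  have hmapsG : MapsTo G (ball 0 1) (closedBall (G 0) 1) := by
    intro u hu
    rw [hG0, mem_closedBall_zero_iff]
    rcases eq_or_ne u 0 with rfl | hu0
    · simp [hG0]
    rw [hG u hu0, norm_inv]
    exact (inv_lt_one_of_one_lt₀ (hmaps (one_lt_norm_inv u hu hu0))).le
  have hdG : DifferentiableOn ℂ G (ball 0 1) := by
    intro u hu
    refine DifferentiableAt.differentiableWithinAt ?_
    rcases eq_or_ne u 0 with rfl | hu0
    · exact (HasDerivAt.of_isLittleO (f' := 0) (by simpa [hG0] using hGo)).differentiableAt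
    have hu' := one_lt_norm_inv u hu hu0
    have hFu : DifferentiableAt ℂ F u⁻¹ :=
      hd.differentiableAt ((isOpen_lt continuous_const continuous_norm).mem_nhds hu')
    refine ((hFu.comp u (differentiableAt_inv hu0)).inv ?_).congr_of_eventuallyEq ?_
    · exact norm_pos_iff.1 (one_pos.trans (hmaps hu'))
    · filter_upwards [isOpen_ne.mem_nhds hu0] with v hv using hG v hv
  have hw' : w⁻¹ ∈ ball (0 : ℂ) 1 := by simpa [norm_inv] using inv_lt_one_of_one_lt₀ hw
  have key := Complex.dist_le_mul_div_pow_of_mapsTo_ball_of_isLittleO (n := 1) hdG hmapsG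
    (by simpa [hG0] using hGo.norm_right) hw'
  rw [hG0, dist_zero_right, dist_zero_right, hG _ (inv_ne_zero (norm_pos_iff.1 (one_pos.trans hw))),
    inv_inv, norm_inv, norm_inv, div_one, one_mul, inv_pow] at key
  exact (inv_le_inv₀ (one_pos.trans (hmaps hw)) (by positivity)).1 key

def realSegment (a b : ℝ) : Set ℂ := (fun x : ℝ ↦ (x : ℂ)) '' Icc a b

lemma mem_realSegment_iff {a b : ℝ} {z : ℂ} :
    z ∈ realSegment a b ↔ z.im = 0 ∧ z.re ∈ Icc a b := by
  constructor
  · rintro ⟨x, hx, rfl⟩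
    simpa using hx
  · rintro ⟨him, hre⟩
    exact ⟨z.re, hre, Complex.ext rfl him.symm⟩

lemma isClosed_realSegment (a b : ℝ) : IsClosed (realSegment a b) :=
  (isCompact_Icc.image continuous_ofReal).isClosed

section AddInv

variable {w : ℂ}

lemma add_inv_injOn : InjOn (fun w : ℂ ↦ w + w⁻¹) {w | 1 < ‖w‖} := by
  intro w hw w' hw' h
  have hw0 : w ≠ 0 := norm_pos_iff.1 (one_pos.trans hw)
  have hw'0 : w' ≠ 0 := norm_pos_iff.1 (one_pos.trans hw')
  have key : (w - w') * (w * w' - 1) = 0 := by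
    simp only at h
    field_simp at h
    linear_combination h
  refine sub_eq_zero.1 ((mul_eq_zero.1 key).resolve_right fun h1 ↦ ?_)
  have : ‖w‖ * ‖w'‖ = 1 := by rw [← norm_mul, sub_eq_zero.1 h1, norm_one]
  nlinarith [show 1 < ‖w‖ from hw, show 1 < ‖w'‖ from hw']

lemma add_inv_notMem_realSegment (hw : 1 < ‖w‖) : w + w⁻¹ ∉ realSegment (-2) 2 := by
  rw [mem_realSegment_iff]
  rintro ⟨him, ht⟩
  have hw0 : w ≠ 0 := norm_pos_iff.1 (one_pos.trans hw)
  have heq : w * w + 1 = (w + w⁻¹).re * w := by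
    rw [show ((w + w⁻¹).re : ℂ) = w + w⁻¹ from Complex.ext rfl him.symm]
    field_simp
  have hnorm : 1 < w.re * w.re + w.im * w.im := by
    rw [← normSq_apply, normSq_eq_norm_sq]; nlinarith
  generalize (w + w⁻¹).re = t at heq ht
  have hre := congrArg re heq
  have him := congrArg im heq
  simp only [mul_re, mul_im, add_re, add_im, one_re, one_im, ofReal_re, ofReal_im] at hre him
  obtain ⟨ht₁, ht₂⟩ := ht
  rcases eq_or_ne w.im 0 with hy | hy
  · rw [hy] at hre hnorm
    nlinarith [sq_nonneg (w.re * w.re - 1), sq_nonneg (t * w.re),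
      mul_nonneg (sub_nonneg.2 ht₁) (sub_nonneg.2 ht₂)]
  · obtain rfl : t = 2 * w.re := mul_right_cancel₀ hy (by linarith)
    nlinarith

lemma exists_add_inv_eq {t : ℂ} (ht : t ∉ realSegment (-2) 2) :
    ∃ w : ℂ, 1 < ‖w‖ ∧ w + w⁻¹ = t := by
  obtain ⟨s, hs⟩ := IsAlgClosed.exists_pow_nat_eq (t ^ 2 - 4) two_pos
  set w := (t + s) / 2
  have hprod : w * (t - w) = 1 := by linear_combination (-1 / 4 : ℂ) * hs
  have hinv : w⁻¹ = t - w := inv_eq_of_mul_eq_one_right hprod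
  rcases lt_trichotomy ‖w‖ 1 with hlt | heq | hgt
  · refine ⟨w⁻¹, ?_, by rw [inv_inv, hinv]; ring⟩
    have hw0 : w ≠ 0 := by rintro h; simp [h] at hprod
    rw [norm_inv]
    exact one_lt_inv_iff₀.2 ⟨norm_pos_iff.2 hw0, hlt⟩
  · refine absurd ?_ ht
    have hconj : w⁻¹ = conj w := by
      rw [Complex.inv_def, normSq_eq_norm_sq, heq]; simp
    have hre : |w.re| ≤ 1 := heq ▸ abs_re_le_norm w
    rw [show t = w + w⁻¹ by rw [hinv]; ring, hconj, add_conj, mem_realSegment_iff]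
    refine ⟨by simp, ?_⟩
    simp only [ofReal_re, mem_Icc]
    constructor <;> linarith [abs_le.1 hre]
  · exact ⟨w, hgt, by rw [hinv]; ring⟩

lemma sub_one_le_norm_add_inv (hw : 1 ≤ ‖w‖) : ‖w‖ - 1 ≤ ‖w + w⁻¹‖ := by
  have : ‖w⁻¹‖ ≤ 1 := by rw [norm_inv]; exact inv_le_one_of_one_le₀ hw
  have := norm_sub_le (w + w⁻¹) w⁻¹
  rw [add_sub_cancel_right] at this
  linarith

lemma norm_add_inv_le (hw : 1 ≤ ‖w‖) : ‖w + w⁻¹‖ ≤ ‖w‖ + 1 := by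
  have : ‖w⁻¹‖ ≤ 1 := by rw [norm_inv]; exact inv_le_one_of_one_le₀ hw
  linarith [norm_add_le w w⁻¹]

end AddInv

noncomputable def joukowski (a b : ℝ) (w : ℂ) : ℂ := (a + b) / 2 + (b - a) / 4 * (w + w⁻¹)

noncomputable def joukowskiInv (a b : ℝ) : ℂ → ℂ := invFunOn (joukowski a b) {w | 1 < ‖w‖}

section Joukowski

variable {a b : ℝ} {w z : ℂ}

lemma affine_mem_realSegment_iff (hab : a < b) {t : ℂ} :
    (a + b) / 2 + (b - a) / 4 * t ∈ realSegment a b ↔ t ∈ realSegment (-2) 2 := by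
  have hr : (0 : ℝ) < (b - a) / 4 := by linarith
  have hre : ((a + b) / 2 + (b - a) / 4 * t : ℂ).re = (a + b) / 2 + (b - a) / 4 * t.re := by
    simp [← ofReal_ofNat, ← ofReal_add, ← ofReal_sub, ← ofReal_div]
  have him : ((a + b) / 2 + (b - a) / 4 * t : ℂ).im = (b - a) / 4 * t.im := by
    simp [← ofReal_ofNat, ← ofReal_add, ← ofReal_sub, ← ofReal_div]
  simp only [mem_realSegment_iff, hre, him, mul_eq_zero, hr.ne', false_or, mem_Icc]
  refine and_congr_right fun _ ↦ ⟨fun ⟨h1, h2⟩ ↦ ⟨?_, ?_⟩, fun ⟨h1, h2⟩ ↦ ⟨?_, ?_⟩⟩ <;> nlinarith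

lemma joukowski_scale_ne_zero (hab : a ≠ b) : ((b - a) / 4 : ℂ) ≠ 0 := by
  rw [← ofReal_ofNat, ← ofReal_sub, ← ofReal_div, ofReal_ne_zero]
  exact div_ne_zero (sub_ne_zero.2 hab.symm) four_ne_zero

lemma joukowski_injOn (hab : a ≠ b) : InjOn (joukowski a b) {w | 1 < ‖w‖} := fun _ hw _ hw' h ↦
  add_inv_injOn hw hw' (mul_left_cancel₀ (joukowski_scale_ne_zero hab) (add_left_cancel h))

lemma joukowski_notMem_realSegment (hab : a < b) (hw : 1 < ‖w‖) :
    joukowski a b w ∉ realSegment a b := by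
  rw [joukowski, affine_mem_realSegment_iff hab]
  exact add_inv_notMem_realSegment hw

lemma exists_joukowski_eq (hab : a < b) (hz : z ∉ realSegment a b) :
    ∃ w : ℂ, 1 < ‖w‖ ∧ joukowski a b w = z := by
  set t := (z - (a + b) / 2) / ((b - a) / 4)
  have hz' : z = (a + b) / 2 + (b - a) / 4 * t := by
    rw [mul_div_cancel₀ _ (joukowski_scale_ne_zero hab.ne)]; ring
  rw [hz', affine_mem_realSegment_iff hab] at hz
  obtain ⟨w, hw, hwt⟩ := exists_add_inv_eq hz
  exact ⟨w, hw, by rw [joukowski, hwt, ← hz']⟩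

lemma hasStrictDerivAt_joukowski (hw : w ≠ 0) :
    HasStrictDerivAt (joukowski a b) ((b - a) / 4 * (1 - (w ^ 2)⁻¹)) w := by
  have h := (((hasStrictDerivAt_id w).add (hasStrictDerivAt_inv hw)).const_mul
    ((b - a) / 4 : ℂ)).const_add ((a + b) / 2 : ℂ)
  rwa [← sub_eq_add_neg] at h

lemma deriv_joukowski_ne_zero (hab : a ≠ b) (hw : 1 < ‖w‖) :
    (b - a) / 4 * (1 - (w ^ 2)⁻¹) ≠ (0 : ℂ) := by
  refine mul_ne_zero (joukowski_scale_ne_zero hab) (sub_ne_zero.2 fun h ↦ ?_)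
  have : ‖w‖ ^ 2 = 1 := by rw [← norm_pow, inv_eq_one.1 h.symm, norm_one]
  nlinarith

lemma norm_joukowski_sub_center (a b : ℝ) (w : ℂ) :
    ‖joukowski a b w - (a + b) / 2‖ = |b - a| / 4 * ‖w + w⁻¹‖ := by
  rw [joukowski, add_sub_cancel_left]
  simp [← ofReal_sub, Complex.norm_real]

lemma norm_joukowski_le (hw : 1 ≤ ‖w‖) :
    ‖joukowski a b w‖ ≤ (|a + b| / 2 + |b - a| / 2) * ‖w‖ := by
  have hc : ‖((a + b) / 2 : ℂ)‖ = |a + b| / 2 := by simp [← ofReal_add, Complex.norm_real]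
  have := norm_sub_norm_le (joukowski a b w) ((a + b) / 2)
  rw [norm_joukowski_sub_center, hc] at this
  have : |b - a| / 4 * ‖w + w⁻¹‖ ≤ |b - a| / 4 * (‖w‖ + 1) := by
    gcongr; exact norm_add_inv_le hw
  nlinarith [abs_nonneg (a + b), abs_nonneg (b - a)]

lemma le_norm_joukowski (hw : 1 ≤ ‖w‖) :
    |b - a| / 4 * (‖w‖ - 1) - |a + b| / 2 ≤ ‖joukowski a b w‖ := by
  have hc : ‖((a + b) / 2 : ℂ)‖ = |a + b| / 2 := by simp [← ofReal_add, Complex.norm_real]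
  have := norm_sub_le (joukowski a b w) ((a + b) / 2)
  rw [norm_joukowski_sub_center, hc] at this
  have : |b - a| / 4 * (‖w‖ - 1) ≤ |b - a| / 4 * ‖w + w⁻¹‖ := by
    gcongr; exact sub_one_le_norm_add_inv hw
  linarith

lemma eventually_norm_le_norm_joukowski (hab : a < b) :
    ∀ᶠ w in cobounded ℂ, ‖w‖ ≤ 8 / (b - a) * ‖joukowski a b w‖ := by
  have hr : 0 < b - a := by linarith
  filter_upwards [tendsto_norm_cobounded_atTop.eventually_ge_atTop (2 + 4 * |a + b| / (b - a))]
    with w hw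
  have hw' : 2 * (b - a) + 4 * |a + b| ≤ ‖w‖ * (b - a) := by
    rwa [← div_le_iff₀ hr, add_div, mul_div_cancel_right₀ _ hr.ne']
  have h := le_norm_joukowski (a := a) (b := b) (w := w)
    (by linarith [div_nonneg (mul_nonneg zero_le_four (abs_nonneg (a + b))) hr.le])
  rw [abs_of_pos hr] at h
  rw [div_mul_eq_mul_div, le_div_iff₀ hr]
  nlinarith

lemma joukowskiInv_joukowski (hab : a ≠ b) (hw : 1 < ‖w‖) :
    joukowskiInv a b (joukowski a b w) = w :=
  (joukowski_injOn hab).leftInvOn_invFunOn hw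

lemma one_lt_norm_joukowskiInv (hab : a < b) (hz : z ∉ realSegment a b) :
    1 < ‖joukowskiInv a b z‖ :=
  invFunOn_mem (exists_joukowski_eq hab hz)

lemma joukowski_joukowskiInv (hab : a < b) (hz : z ∉ realSegment a b) :
    joukowski a b (joukowskiInv a b z) = z :=
  invFunOn_eq (exists_joukowski_eq hab hz)

lemma differentiableAt_joukowskiInv (hab : a < b) (hz : z ∉ realSegment a b) :
    DifferentiableAt ℂ (joukowskiInv a b) z := by
  obtain ⟨w, hw, rfl⟩ := exists_joukowski_eq hab hz
  have hleft : ∀ᶠ v in 𝓝 w, joukowskiInv a b (joukowski a b v) = v :=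
    (isOpen_lt continuous_const continuous_norm).eventually_mem hw |>.mono
      fun v hv ↦ joukowskiInv_joukowski hab.ne hv
  exact ((hasStrictDerivAt_joukowski (norm_pos_iff.1 (one_pos.trans hw))).to_local_left_inverse
    (deriv_joukowski_ne_zero hab.ne hw) hleft).hasDerivAt.differentiableAt

end Joukowski

section Dynamics

variable {a b : ℝ} {q : ℂ[X]}

lemma isLittleO_joukowskiInv_eval_joukowski (hab : a < b)
    (hq : MapsTo (fun z ↦ q.eval z) (realSegment a b)ᶜ (realSegment a b)ᶜ)
    (hqd : 1 < q.natDegree) :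
    (fun w ↦ w) =o[cobounded ℂ] fun w ↦ joukowskiInv a b (q.eval (joukowski a b w)) := by
  have hψ := eventually_norm_le_norm_joukowski hab
  have hψ_tendsto : Tendsto (joukowski a b) (cobounded ℂ) (cobounded ℂ) := by
    rw [← tendsto_norm_atTop_iff_cobounded]
    refine tendsto_atTop_mono' _ (hψ.mono fun w hw ↦ ?_)
      (tendsto_norm_cobounded_atTop.const_mul_atTop (by linarith : 0 < (b - a) / 8))
    rw [div_mul_eq_mul_div, le_div_iff₀ (by linarith)] at hw
    linarith
  have hq_o : (fun z ↦ z) =o[cobounded ℂ] fun z ↦ q.eval z := by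
    simpa using Polynomial.isLittleO_cobounded_of_degree_lt (P := X) (Q := q)
      (degree_lt_degree (by rwa [natDegree_X]))
  have hφ : (fun w ↦ q.eval (joukowski a b w)) =O[cobounded ℂ]
      fun w ↦ joukowskiInv a b (q.eval (joukowski a b w)) := by
    refine IsBigO.of_bound (|a + b| / 2 + |b - a| / 2) ?_
    filter_upwards [tendsto_norm_cobounded_atTop.eventually_gt_atTop 1] with w hw
    have hz : q.eval (joukowski a b w) ∉ realSegment a b :=
      hq (joukowski_notMem_realSegment hab hw)
    conv_lhs => rw [← joukowski_joukowskiInv hab hz]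
    exact norm_joukowski_le (one_lt_norm_joukowskiInv hab hz).le
  exact (IsBigO.of_bound _ hψ).trans_isLittleO ((hq_o.comp_tendsto hψ_tendsto).trans_isBigO hφ)

lemma sq_norm_joukowskiInv_le (hab : a < b)
    (hq : MapsTo (fun z ↦ q.eval z) (realSegment a b)ᶜ (realSegment a b)ᶜ)
    (hqd : 1 < q.natDegree) {z : ℂ} (hz : z ∉ realSegment a b) :
    ‖joukowskiInv a b z‖ ^ 2 ≤ ‖joukowskiInv a b (q.eval z)‖ := by
  have hmaps : ∀ w : ℂ, 1 < ‖w‖ → q.eval (joukowski a b w) ∉ realSegment a b :=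
    fun w hw ↦ hq (joukowski_notMem_realSegment hab hw)
  have hdiff : DifferentiableOn ℂ (fun w ↦ joukowskiInv a b (q.eval (joukowski a b w)))
      {w | 1 < ‖w‖} := fun w hw ↦ by
    have hψ : DifferentiableAt ℂ (joukowski a b) w :=
      (hasStrictDerivAt_joukowski (norm_pos_iff.1 (one_pos.trans hw))).hasDerivAt.differentiableAt
    exact ((differentiableAt_joukowskiInv hab (hmaps w hw)).comp w
      (q.differentiableAt.comp w hψ)).differentiableWithinAt
  simpa [joukowski_joukowskiInv hab hz] using sq_norm_le_norm_of_mapsTo_exterior hdiff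
    (fun w hw ↦ one_lt_norm_joukowskiInv hab (hmaps w hw))
    (isLittleO_joukowskiInv_eval_joukowski hab hq hqd) (one_lt_norm_joukowskiInv hab hz)

lemma filledJuliaSet_subset_realSegment (hab : a < b)
    (hq : MapsTo (fun z ↦ q.eval z) (realSegment a b)ᶜ (realSegment a b)ᶜ)
    (hqd : 1 < q.natDegree) : filledJuliaSet q ⊆ realSegment a b := by
  intro z hbdd
  by_contra hz
  set orbit : ℕ → ℂ := fun n ↦ (fun w ↦ q.eval w)^[n] z
  have horbit : ∀ n, orbit n ∉ realSegment a b := fun n ↦ hq.iterate n hz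
  have hgrowth : ∀ n, ‖joukowskiInv a b z‖ ^ 2 ^ n ≤ ‖joukowskiInv a b (orbit n)‖ := by
    intro n
    induction n with
    | zero => simp [orbit]
    | succ n ih =>
      calc ‖joukowskiInv a b z‖ ^ 2 ^ (n + 1) = (‖joukowskiInv a b z‖ ^ 2 ^ n) ^ 2 := by
            rw [pow_succ, pow_mul]
        _ ≤ ‖joukowskiInv a b (orbit n)‖ ^ 2 := by gcongr
        _ ≤ ‖joukowskiInv a b (orbit (n + 1))‖ := by
            simpa only [orbit, iterate_succ_apply'] using
              sq_norm_joukowskiInv_le hab hq hqd (horbit n)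
  obtain ⟨C, hC⟩ := isBounded_iff_forall_norm_le.1 (show IsBounded (range orbit) from hbdd)
  set M := 4 * (C + |a + b| / 2) / (b - a) + 1
  have hbound : ∀ n, ‖joukowskiInv a b (orbit n)‖ ≤ M := by
    intro n
    have h := le_norm_joukowski (a := a) (b := b) (one_lt_norm_joukowskiInv hab (horbit n)).le
    rw [joukowski_joukowskiInv hab (horbit n), abs_of_pos (sub_pos.2 hab)] at h
    have hCn : ‖orbit n‖ ≤ C := hC _ (mem_range_self n)
    rw [← sub_le_iff_le_add, le_div_iff₀ (sub_pos.2 hab)]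
    linarith
  have htop : Tendsto (fun n : ℕ ↦ ‖joukowskiInv a b z‖ ^ 2 ^ n) atTop atTop :=
    (tendsto_pow_atTop_atTop_of_one_lt (one_lt_norm_joukowskiInv hab hz)).comp
      (tendsto_pow_atTop_atTop_of_one_lt one_lt_two)
  obtain ⟨n, hn⟩ := (htop.eventually_gt_atTop M).exists
  exact (hn.trans_le (hgrowth n)).not_ge (hbound n)

end Dynamics

/-- If for some nondegenerate real interval `[a,b]` all complex preimages under a real
polynomial `p` of degree `> 1` of points of `[a,b]` lie in `[a,b]`, then the Julia set
of `p` is real. -/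
theorem stmt_8 (p : Polynomial ℝ) (hd : 1 < p.natDegree) (a b : ℝ) (hab : a < b)
    (hinv : ∀ z : ℂ, (p.map (algebraMap ℝ ℂ)).eval z ∈ (fun x : ℝ => (x : ℂ)) '' Set.Icc a b →
      z ∈ (fun x : ℝ => (x : ℂ)) '' Set.Icc a b) :
    ∀ z ∈ juliaSet (p.map (algebraMap ℝ ℂ)), z.im = 0 := by
  intro z hz
  have hqd : 1 < (p.map (algebraMap ℝ ℂ)).natDegree := by rwa [natDegree_map]
  have hsub := closure_mono (filledJuliaSet_subset_realSegment hab
    (fun w hw hmem ↦ hw (hinv w hmem)) hqd)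
  rw [(isClosed_realSegment a b).closure_eq] at hsub
  exact (mem_realSegment_iff.1 (hsub (frontier_subset_closure hz))).1
end

section
/- Let f be holomorphic on the open right half-plane and suppose |f(z)| ≥ 1 for all z with Re z > 0. Then for every ε ∈ (0, π/2) there exist positive constants A, B such that |f(z)| ≤ B·exp(A|z|) for all z with |arg z| ≤ π/2 − ε and |z| ≥ 1. -/
/-!
Pull `f` back to the unit disc by `w ↦ (1 + w) / (1 - w)`. There it has no zeros, hence a
holomorphic logarithm `g` with `Re g = log ‖f‖ ≥ 0`, and the Borel–Carathéodory inequality for `-g`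
bounds `‖g w‖` by a multiple of `1 / (1 - ‖w‖)`. For `w = (z - 1) / (z + 1)` one has
`1 - ‖w‖ ≥ 2 Re z / (‖z‖ + 1) ^ 2`, and `Re z ≥ sin ε ‖z‖` in the sector, so `log ‖f z‖ = O(‖z‖)`.
-/

open Real Metric Set

namespace Complex

theorem exists_differentiableOn_exp_eq {F : ℂ → ℂ} {c : ℂ} {r : ℝ}
    (hF : DifferentiableOn ℂ F (ball c r)) (hF0 : ∀ z ∈ ball c r, F z ≠ 0) :
    ∃ g : ℂ → ℂ, DifferentiableOn ℂ g (ball c r) ∧ ∀ z ∈ ball c r, exp (g z) = F z := by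
  have hlogDeriv : DifferentiableOn ℂ (fun z ↦ deriv F z / F z) (ball c r) :=
    (hF.deriv isOpen_ball).div hF hF0
  obtain ⟨g, hgc, hg⟩ := hlogDeriv.isExactOn_ball.with_val_at c (log (F c))
  refine ⟨g, fun z hz ↦ (hg z hz).differentiableAt.differentiableWithinAt, fun z hz ↦ ?_⟩
  have hc : c ∈ ball c r := mem_ball_self (pos_of_mem_ball hz)
  have hderiv : ∀ x ∈ ball c r, HasDerivAt (fun x ↦ F x * exp (-g x)) 0 x := by
    intro x hx
    have hFx := (hF.differentiableAt (isOpen_ball.mem_nhds hx)).hasDerivAt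
    refine (hFx.mul (hg x hx).neg.cexp).congr_deriv ?_
    have := hF0 x hx
    field_simp
    ring
  have hconst := isOpen_ball.is_const_of_deriv_eq_zero (convex_ball c r).isPreconnected
    (fun x hx ↦ (hderiv x hx).differentiableAt.differentiableWithinAt)
    (fun x hx ↦ (hderiv x hx).deriv) hz hc
  rw [hgc, exp_neg, exp_neg, exp_log (hF0 c hc), mul_inv_cancel₀ (hF0 c hc)] at hconst
  exact ((mul_inv_eq_one₀ (exp_ne_zero _)).mp hconst).symm

noncomputable def discToHalfPlane (w : ℂ) : ℂ := (1 + w) / (1 - w)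

noncomputable def halfPlaneToDisc (z : ℂ) : ℂ := (z - 1) / (z + 1)

lemma re_discToHalfPlane_pos {w : ℂ} (hw : ‖w‖ < 1) : 0 < (discToHalfPlane w).re := by
  have hw1 : 1 - w ≠ 0 := by intro h; simp [← sub_eq_zero.mp h] at hw
  have hnormSq : w.re * w.re + w.im * w.im < 1 := by
    rw [← normSq_apply, ← Complex.sq_norm]; nlinarith [norm_nonneg w]
  rw [discToHalfPlane, div_re, ← add_div]
  refine div_pos ?_ (normSq_pos.mpr hw1)
  simp only [add_re, add_im, sub_re, sub_im, one_re, one_im]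
  nlinarith

lemma sq_norm_add_one_sub_sq_norm_sub_one (z : ℂ) : ‖z + 1‖ ^ 2 - ‖z - 1‖ ^ 2 = 4 * z.re := by
  simp only [Complex.sq_norm, normSq_apply, add_re, add_im, sub_re, sub_im, one_re, one_im]
  ring

lemma norm_sub_one_lt_norm_add_one {z : ℂ} (hz : 0 < z.re) : ‖z - 1‖ < ‖z + 1‖ := by
  have := sq_norm_add_one_sub_sq_norm_sub_one z
  exact lt_of_pow_lt_pow_left₀ 2 (norm_nonneg _) (by linarith)

lemma norm_halfPlaneToDisc_lt_one {z : ℂ} (hz : 0 < z.re) : ‖halfPlaneToDisc z‖ < 1 := by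
  have hlt := norm_sub_one_lt_norm_add_one hz
  rwa [halfPlaneToDisc, norm_div, div_lt_one ((norm_nonneg _).trans_lt hlt)]

lemma discToHalfPlane_halfPlaneToDisc {z : ℂ} (hz : z + 1 ≠ 0) :
    discToHalfPlane (halfPlaneToDisc z) = z := by
  rw [discToHalfPlane, halfPlaneToDisc]
  field_simp
  ring

lemma two_mul_re_div_le_one_sub_norm_halfPlaneToDisc {z : ℂ} (hz : 0 < z.re) :
    2 * z.re / (‖z‖ + 1) ^ 2 ≤ 1 - ‖halfPlaneToDisc z‖ := by
  set p := ‖z + 1‖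
  set q := ‖z - 1‖
  have hpq : p ^ 2 - q ^ 2 = 4 * z.re := sq_norm_add_one_sub_sq_norm_sub_one z
  have hqp : q < p := norm_sub_one_lt_norm_add_one hz
  have hp : p ≤ ‖z‖ + 1 := by simpa using norm_add_le z 1
  have hq : q ≤ ‖z‖ + 1 := by simpa using norm_sub_le z 1
  have hq0 : 0 ≤ q := norm_nonneg _
  have hp0 : 0 < p := hq0.trans_lt hqp
  have hdiff : 2 * z.re / (‖z‖ + 1) ≤ p - q := by
    rw [div_le_iff₀ (by positivity)]
    nlinarith [mul_le_mul_of_nonneg_left (add_le_add hp hq) (sub_nonneg.mpr hqp.le)]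
  calc 2 * z.re / (‖z‖ + 1) ^ 2 = 2 * z.re / (‖z‖ + 1) / (‖z‖ + 1) := by
        rw [div_div, sq]
    _ ≤ (p - q) / p := by gcongr
    _ = 1 - ‖halfPlaneToDisc z‖ := by rw [halfPlaneToDisc, norm_div, one_sub_div hp0.ne']

theorem exists_norm_le_exp_div_one_sub_norm_of_one_le_norm {F : ℂ → ℂ}
    (hF : DifferentiableOn ℂ F (ball 0 1)) (hF1 : ∀ w ∈ ball (0 : ℂ) 1, 1 ≤ ‖F w‖) :
    ∃ K > 0, ∀ w ∈ ball (0 : ℂ) 1, ‖F w‖ ≤ Real.exp (K / (1 - ‖w‖)) := by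
  obtain ⟨g, hg, hexp⟩ := exists_differentiableOn_exp_eq hF
    (fun w hw ↦ norm_pos_iff.mp (one_pos.trans_le (hF1 w hw)))
  have hnorm : ∀ w ∈ ball (0 : ℂ) 1, ‖F w‖ = Real.exp (g w).re := fun w hw ↦ by
    rw [← hexp w hw, norm_exp]
  have hre : MapsTo (-g) (ball 0 1) {z | z.re ≤ 1} := fun w hw ↦ by
    have := hF1 w hw
    rw [hnorm w hw, Real.one_le_exp_iff] at this
    simp only [mem_ofPred_eq, Pi.neg_apply, neg_re]
    linarith
  refine ⟨2 + 2 * ‖g 0‖, by positivity, fun w hw ↦ ?_⟩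
  have hw1 : ‖w‖ < 1 := mem_ball_zero_iff.mp hw
  have hBC := borelCaratheodory one_pos hg.neg hre one_pos hw
  simp only [Pi.neg_apply, norm_neg, mul_one] at hBC
  calc ‖F w‖ = Real.exp (g w).re := hnorm w hw
    _ ≤ Real.exp ‖g w‖ := Real.exp_le_exp.mpr (re_le_norm _)
    _ ≤ Real.exp ((2 + 2 * ‖g 0‖) / (1 - ‖w‖)) := by
      refine Real.exp_le_exp.mpr (hBC.trans ?_)
      rw [← add_div]
      refine div_le_div_of_nonneg_right ?_ (by linarith)
      nlinarith [norm_nonneg (g 0)]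

theorem exists_norm_le_exp_of_one_le_norm_of_re_pos {f : ℂ → ℂ}
    (hf : DifferentiableOn ℂ f {z : ℂ | 0 < z.re}) (hf1 : ∀ z : ℂ, 0 < z.re → 1 ≤ ‖f z‖) :
    ∃ K > 0, ∀ z : ℂ, 0 < z.re → ‖f z‖ ≤ Real.exp (K * (‖z‖ + 1) ^ 2 / (2 * z.re)) := by
  have hmaps : MapsTo discToHalfPlane (ball 0 1) {z : ℂ | 0 < z.re} := fun w hw ↦
    re_discToHalfPlane_pos (mem_ball_zero_iff.mp hw)
  have hdiff : DifferentiableOn ℂ discToHalfPlane (ball 0 1) := by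
    refine DifferentiableOn.div (by fun_prop) (by fun_prop) fun w hw h ↦ ?_
    simp [← sub_eq_zero.mp h] at hw
  obtain ⟨K, hK, hbound⟩ := exists_norm_le_exp_div_one_sub_norm_of_one_le_norm
    (hf.comp hdiff hmaps) (fun w hw ↦ hf1 _ (hmaps hw))
  refine ⟨K, hK, fun z hz ↦ ?_⟩
  have hz1 : z + 1 ≠ 0 := fun h ↦ by
    have := congr_arg re h
    simp only [add_re, one_re, zero_re] at this
    linarith
  calc ‖f z‖ = ‖f (discToHalfPlane (halfPlaneToDisc z))‖ := by
        rw [discToHalfPlane_halfPlaneToDisc hz1]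
    _ ≤ Real.exp (K / (1 - ‖halfPlaneToDisc z‖)) :=
        hbound _ (mem_ball_zero_iff.mpr (norm_halfPlaneToDisc_lt_one hz))
    _ ≤ Real.exp (K / (2 * z.re / (‖z‖ + 1) ^ 2)) := by
        gcongr
        exact two_mul_re_div_le_one_sub_norm_halfPlaneToDisc hz
    _ = Real.exp (K * (‖z‖ + 1) ^ 2 / (2 * z.re)) := by rw [div_div_eq_mul_div]

lemma cos_mul_norm_le_re_of_abs_arg_le {z : ℂ} {θ : ℝ} (h : |arg z| ≤ θ) (hθ : θ ≤ π) :
    Real.cos θ * ‖z‖ ≤ z.re := by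
  rw [← norm_mul_cos_arg, mul_comm]
  gcongr
  rw [← Real.cos_abs (arg z)]
  exact Real.cos_le_cos_of_nonneg_of_le_pi (abs_nonneg _) hθ h

end Complex

/-- A holomorphic function on the right half-plane with `|f| ≥ 1` has at most
exponential growth of order one in every smaller sector `|arg z| ≤ π/2 - ε`. -/
theorem stmt_10 (f : ℂ → ℂ) (hf : DifferentiableOn ℂ f {z : ℂ | 0 < z.re})
    (hlb : ∀ z : ℂ, 0 < z.re → 1 ≤ ‖f z‖) :
    ∀ ε : ℝ, 0 < ε → ε < π / 2 → ∃ A B : ℝ, 0 < A ∧ 0 < B ∧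
      ∀ z : ℂ, |Complex.arg z| ≤ π / 2 - ε → 1 ≤ ‖z‖ →
        ‖f z‖ ≤ B * Real.exp (A * ‖z‖) := by
  intro ε hε hεπ
  obtain ⟨K, hK, hbound⟩ := Complex.exists_norm_le_exp_of_one_le_norm_of_re_pos hf hlb
  have hsin : 0 < sin ε := sin_pos_of_pos_of_lt_pi hε (by linarith [pi_pos])
  refine ⟨2 * K / sin ε, 1, by positivity, one_pos, fun z harg hz ↦ ?_⟩
  have hre : sin ε * ‖z‖ ≤ z.re := by
    simpa [cos_pi_div_two_sub] using
      Complex.cos_mul_norm_le_re_of_abs_arg_le harg (by linarith [pi_pos])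
  have hzre : 0 < z.re := (mul_pos hsin (one_pos.trans_le hz)).trans_le hre
  calc ‖f z‖ ≤ exp (K * (‖z‖ + 1) ^ 2 / (2 * z.re)) := hbound z hzre
    _ ≤ exp (K * (2 * ‖z‖) ^ 2 / (2 * (sin ε * ‖z‖))) := by gcongr; linarith
    _ = 1 * exp (2 * K / sin ε * ‖z‖) := by field_simp
end

section
/- Let f be holomorphic on the sector W = {z ≠ 0 : α < arg z < β} and suppose there is M > 0 with |f(z)| ≥ M on W. Then for every ε > 0 there exist A, B > 0 such that |f(z)| ≤ B·exp(A|z|^κ) for all z with α + ε < arg z < β − ε and |z| ≥ 1, where κ = π/(β − α). -/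
/-!
The unit disc is mapped onto the sector by `T = P ∘ K`, where `K ζ = i (1 + ζ) / (1 - ζ)` is the
Cayley map onto the upper half-plane and `P w = exp (i α) w ^ (1 / κ)`. As `f` has no zeros,
`f ∘ T = exp h` with `h` holomorphic on the disc and `Re h ≥ log M`; Borel–Carathéodory applied
to `-h` gives `|h ζ| ≤ C / (1 - |ζ|)`. A point `z` of the smaller sector is `P w` with
`w = |z| ^ κ e ^ (i φ)`, `κ ε < φ < π - κ ε`, so `Im w ≥ |z| ^ κ sin (κ ε)`, and for `K ζ = w`
one has `1 / (1 - |ζ|) ≤ |w + i| ^ 2 / (2 Im w) = O(|z| ^ κ)` once `|z| ≥ 1`.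
-/

open Real

/-- The open sector `{z ≠ 0 : α < arg z < β}` (arguments measured continuously). -/
def sector (α β : ℝ) : Set ℂ :=
  {z | ∃ r θ : ℝ, 0 < r ∧ α < θ ∧ θ < β ∧ z = (r : ℂ) * Complex.exp ((θ : ℂ) * Complex.I)}

open Complex Metric Set

theorem exists_differentiableOn_exp_eq_of_ne_zero {g : ℂ → ℂ} {c : ℂ} {R : ℝ}
    (hg : DifferentiableOn ℂ g (ball c R)) (hg₀ : ∀ z ∈ ball c R, g z ≠ 0) :
    ∃ h : ℂ → ℂ, DifferentiableOn ℂ h (ball c R) ∧ ∀ z ∈ ball c R, exp (h z) = g z := by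
  have hderiv : DifferentiableOn ℂ (fun z ↦ deriv g z / g z) (ball c R) :=
    ((hg.analyticOnNhd isOpen_ball).deriv.differentiableOn).div hg hg₀
  obtain ⟨h, hhc, hh⟩ := hderiv.isExactOn_ball.with_val_at c (log (g c))
  have hquot : ∀ z ∈ ball c R, HasDerivAt (fun w ↦ g w * exp (-h w)) 0 z := by
    intro z hz
    have hprod : HasDerivAt (fun w ↦ g w * exp (-h w))
        (deriv g z * exp (-h z) + g z * (exp (-h z) * -(deriv g z / g z))) z :=
      (hg.differentiableAt (isOpen_ball.mem_nhds hz)).hasDerivAt.mul (hh z hz).neg.cexp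
    convert hprod using 1
    field_simp [hg₀ z hz]
    ring
  refine ⟨h, fun z hz ↦ (hh z hz).differentiableAt.differentiableWithinAt, fun z hz ↦ ?_⟩
  have hc : c ∈ ball c R := mem_ball_self (pos_of_mem_ball hz)
  have hconst := isOpen_ball.is_const_of_deriv_eq_zero (convex_ball c R).isPreconnected
    (fun w hw ↦ (hquot w hw).differentiableAt.differentiableWithinAt)
    (fun w hw ↦ (hquot w hw).deriv) hz hc
  rw [hhc, Complex.exp_neg, Complex.exp_neg, exp_log (hg₀ c hc), mul_inv_cancel₀ (hg₀ c hc),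
    ← div_eq_mul_inv, div_eq_one_iff_eq (Complex.exp_ne_zero _)] at hconst
  exact hconst.symm

theorem norm_le_of_le_re_of_mem_ball {h : ℂ → ℂ} {m R : ℝ} {z : ℂ}
    (hh : DifferentiableOn ℂ h (ball 0 R)) (hm : ∀ w ∈ ball (0 : ℂ) R, m ≤ (h w).re)
    (hz : z ∈ ball (0 : ℂ) R) :
    ‖h z‖ ≤ 2 * (|m| + 1 + ‖h 0‖) * R / (R - ‖z‖) := by
  have hR := pos_of_mem_ball hz
  have hzR : ‖z‖ < R := mem_ball_zero_iff.1 hz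
  have hbc := borelCaratheodory (f := fun w ↦ -h w) (M := |m| + 1) (by positivity) hh.neg
    (fun w hw ↦ by simp only [mem_ofPred_eq, neg_re]; linarith [hm w hw, neg_abs_le m]) hR hz
  simp only [norm_neg] at hbc
  calc ‖h z‖ ≤ 2 * (|m| + 1) * ‖z‖ / (R - ‖z‖) + ‖h 0‖ * (R + ‖z‖) / (R - ‖z‖) := hbc
    _ ≤ 2 * (|m| + 1) * R / (R - ‖z‖) + ‖h 0‖ * (R + R) / (R - ‖z‖) := by gcongr
    _ = 2 * (|m| + 1 + ‖h 0‖) * R / (R - ‖z‖) := by ring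

theorem Real.sin_le_sin_of_le_of_le_pi_sub {a x : ℝ} (ha : -(π / 2) ≤ a) (hax : a ≤ x)
    (hxa : x ≤ π - a) : Real.sin a ≤ Real.sin x := by
  rcases le_total x (π / 2) with hx | hx
  · exact sin_le_sin_of_le_of_le_pi_div_two ha hx hax
  · rw [← Real.sin_pi_sub x]
    exact sin_le_sin_of_le_of_le_pi_div_two ha (by linarith) (by linarith)

noncomputable def cayley (ζ : ℂ) : ℂ := I * (1 + ζ) / (1 - ζ)

theorem one_sub_ne_zero_of_mem_ball {ζ : ℂ} (hζ : ζ ∈ ball (0 : ℂ) 1) : 1 - ζ ≠ 0 := by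
  rw [sub_ne_zero]
  rintro rfl
  simp at hζ

theorem differentiableOn_cayley : DifferentiableOn ℂ cayley (ball 0 1) := fun _ hζ ↦
  ((differentiableAt_id.const_add 1).const_mul I |>.div (differentiableAt_id.const_sub 1)
    (one_sub_ne_zero_of_mem_ball hζ)).differentiableWithinAt

theorem im_cayley {ζ : ℂ} : (cayley ζ).im = (1 - ‖ζ‖ ^ 2) / ‖1 - ζ‖ ^ 2 := by
  simp only [cayley, div_im, mul_im, mul_re, I_re, I_im, add_re, add_im, one_re, one_im, sub_re,
    sub_im, ← normSq_eq_norm_sq, normSq_apply]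
  ring

theorem mapsTo_cayley : MapsTo cayley (ball 0 1) {w | 0 < w.im} := by
  intro ζ hζ
  have hζ1 : ‖ζ‖ ^ 2 < 1 := by nlinarith [norm_nonneg ζ, mem_ball_zero_iff.1 hζ]
  rw [mem_ofPred_eq, im_cayley]
  exact div_pos (sub_pos.2 hζ1) (pow_pos (norm_pos_iff.2 (one_sub_ne_zero_of_mem_ball hζ)) 2)

theorem exists_cayley_eq {w : ℂ} (hw : 0 < w.im) :
    ∃ ζ ∈ ball (0 : ℂ) 1, cayley ζ = w ∧ (1 - ‖ζ‖)⁻¹ ≤ ‖w + I‖ ^ 2 / (2 * w.im) := by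
  have hwI : w + I ≠ 0 := fun h ↦ by
    have := congrArg im h
    simp only [add_im, I_im, zero_im] at this
    linarith
  have hnorm : ‖w + I‖ ^ 2 - ‖w - I‖ ^ 2 = 4 * w.im := by
    simp only [← normSq_eq_norm_sq, normSq_apply, add_re, add_im, sub_re, sub_im, I_re, I_im]
    ring
  have hpos : 0 < ‖w + I‖ := norm_pos_iff.2 hwI
  set ζ := (w - I) / (w + I)
  have hζ : 1 - ‖ζ‖ ^ 2 = 4 * w.im / ‖w + I‖ ^ 2 := by
    rw [norm_div, div_pow, ← hnorm]
    field_simp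
  have hζ1 : ‖ζ‖ < 1 := by
    have : 0 < 4 * w.im / ‖w + I‖ ^ 2 := by positivity
    nlinarith [norm_nonneg ζ]
  refine ⟨ζ, mem_ball_zero_iff.2 hζ1, ?_, ?_⟩
  · simp only [cayley, ζ]
    field_simp
    ring
  · rw [← inv_div]
    refine inv_anti₀ (by positivity) ?_
    rw [show 2 * w.im / ‖w + I‖ ^ 2 = (1 - ‖ζ‖ ^ 2) / 2 by rw [hζ]; ring]
    nlinarith [norm_nonneg ζ]

noncomputable def halfPlaneToSector (α β : ℝ) (w : ℂ) : ℂ :=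
  exp (α * I + ((β - α) / π : ℝ) * log w)

section HalfPlaneToSector

variable {α β : ℝ}

theorem differentiableOn_halfPlaneToSector :
    DifferentiableOn ℂ (halfPlaneToSector α β) {w | 0 < w.im} := fun _ hw ↦
  ((differentiableAt_log (Or.inr hw.ne')).const_mul _ |>.const_add _ |>.cexp).differentiableWithinAt

theorem halfPlaneToSector_mem_sector (hab : α < β) {w : ℂ} (hw : 0 < w.im) :
    halfPlaneToSector α β w ∈ sector α β := by
  set c : ℂ := α * I + ((β - α) / π : ℝ) * log w
  have hc : c.im = α + (β - α) / π * arg w := by simp [c, log_im]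
  have harg₀ : 0 < arg w := (arg_nonneg_iff.2 hw.le).lt_of_ne fun h ↦
    hw.ne' (arg_eq_zero_iff.1 h.symm).2
  have harg : arg w < π := arg_lt_pi_iff.2 (Or.inr hw.ne')
  have hβα : (β - α) / π * π = β - α := div_mul_cancel₀ _ pi_ne_zero
  refine ⟨Real.exp c.re, c.im, Real.exp_pos _, ?_, ?_, ?_⟩
  · rw [hc]
    have : 0 < (β - α) / π * arg w := mul_pos (div_pos (sub_pos.2 hab) pi_pos) harg₀
    linarith
  · rw [hc]
    have : (β - α) / π * arg w < (β - α) / π * π :=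
      mul_lt_mul_of_pos_left harg (div_pos (sub_pos.2 hab) pi_pos)
    linarith
  · rw [ofReal_exp, ← Complex.exp_add, re_add_im]
    rfl

theorem halfPlaneToSector_exp {r θ : ℝ} (hr : 0 < r) (hαθ : α < θ) (hθβ : θ < β) :
    halfPlaneToSector α β (exp ((π / (β - α) : ℝ) * (Real.log r + (θ - α) * I))) =
      r * exp (θ * I) := by
  have hβα : 0 < β - α := by linarith
  set κ := π / (β - α)
  have him : ((κ : ℂ) * (Real.log r + (θ - α) * I)).im = κ * (θ - α) := by simp
  have hlt : κ * (θ - α) < π := by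
    rw [div_mul_eq_mul_div, div_lt_iff₀ hβα]
    nlinarith [pi_pos]
  have hpos : 0 < κ * (θ - α) := mul_pos (div_pos pi_pos hβα) (sub_pos.2 hαθ)
  have harg : (α : ℂ) * I + ((β - α) / π : ℝ) * (κ * (Real.log r + (θ - α) * I)) =
      Real.log r + θ * I := by
    have hκ : (β - α) / π * κ = 1 := by simp only [κ]; field_simp
    calc (α : ℂ) * I + ((β - α) / π : ℝ) * (κ * (Real.log r + (θ - α) * I))
        = α * I + ((β - α) / π * κ : ℝ) * (Real.log r + (θ - α) * I) := by push_cast; ring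
      _ = Real.log r + θ * I := by rw [hκ]; push_cast; ring
  rw [halfPlaneToSector, log_exp (by rw [him]; linarith [pi_pos]) (by rw [him]; exact hlt.le),
    harg, Complex.exp_add, ← ofReal_exp, Real.exp_log hr]

theorem exists_halfPlaneToSector_eq_of_mem_sector {ε : ℝ} (hε : 0 < ε) :
    ∃ c > 0, ∀ z ∈ sector (α + ε) (β - ε), 1 ≤ ‖z‖ → ∃ w : ℂ, 0 < w.im ∧
      halfPlaneToSector α β w = z ∧ ‖w + I‖ ^ 2 / (2 * w.im) ≤ c * ‖z‖ ^ (π / (β - α)) := by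
  by_cases h2ε : 2 * ε < β - α
  swap
  · exact ⟨1, one_pos, fun z ⟨r, θ, _, h₁, h₂, _⟩ _ ↦ absurd (by linarith) h2ε⟩
  set κ := π / (β - α)
  have hκ : 0 < κ := div_pos pi_pos (by linarith)
  have hκβα : κ * (β - α) = π := div_mul_cancel₀ _ (by linarith)
  have hκε : κ * ε < π / 2 := by nlinarith
  set s := Real.sin (κ * ε)
  have hs : 0 < s := sin_pos_of_pos_of_lt_pi (by positivity) (by linarith [pi_pos])
  refine ⟨2 / s, by positivity, ?_⟩
  rintro z ⟨r, θ, hr, hθ₁, hθ₂, rfl⟩ hz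
  have hnorm : ‖(r : ℂ) * exp (θ * I)‖ = r := by
    rw [norm_mul, norm_exp_ofReal_mul_I, mul_one, norm_real, Real.norm_of_nonneg hr.le]
  rw [hnorm] at hz ⊢
  set w := exp ((κ : ℝ) * (Real.log r + (θ - α) * I))
  have hw_re : ((κ : ℂ) * (Real.log r + (θ - α) * I)).re = Real.log r * κ := by simp [mul_comm]
  have hw_im : w.im = r ^ κ * Real.sin (κ * (θ - α)) := by
    rw [exp_im, hw_re, ← rpow_def_of_pos hr]
    simp
  have hw_norm : ‖w‖ = r ^ κ := by rw [norm_exp, hw_re, rpow_def_of_pos hr]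
  have hsin : s ≤ Real.sin (κ * (θ - α)) :=
    sin_le_sin_of_le_of_le_pi_sub (by nlinarith) (by nlinarith) (by nlinarith)
  have hrκ : 1 ≤ r ^ κ := one_le_rpow hz hκ.le
  have hw_im_ge : r ^ κ * s ≤ w.im := by rw [hw_im]; gcongr
  have hwI : ‖w + I‖ ≤ 2 * r ^ κ := by
    calc ‖w + I‖ ≤ ‖w‖ + ‖I‖ := norm_add_le _ _
      _ ≤ 2 * r ^ κ := by rw [hw_norm, norm_I]; linarith
  refine ⟨w, by nlinarith, halfPlaneToSector_exp hr (by linarith) (by linarith), ?_⟩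
  calc ‖w + I‖ ^ 2 / (2 * w.im) ≤ (2 * r ^ κ) ^ 2 / (2 * (r ^ κ * s)) := by gcongr
    _ = 2 / s * r ^ κ := by field_simp

end HalfPlaneToSector

theorem stmt_11_general (α β : ℝ) (hab : α < β)
    (f : ℂ → ℂ) (hf : DifferentiableOn ℂ f (sector α β))
    (M : ℝ) (hM : 0 < M) (hlb : ∀ z ∈ sector α β, M ≤ ‖f z‖) :
    ∀ ε : ℝ, 0 < ε → ∃ A B : ℝ, 0 < A ∧ 0 < B ∧
      ∀ z ∈ sector (α + ε) (β - ε), 1 ≤ ‖z‖ →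
        ‖f z‖ ≤ B * Real.exp (A * ‖z‖ ^ (π / (β - α))) := by
  intro ε hε
  set T := halfPlaneToSector α β ∘ cayley
  have hT : MapsTo T (ball 0 1) (sector α β) := fun _ hζ ↦
    halfPlaneToSector_mem_sector hab (mapsTo_cayley hζ)
  obtain ⟨h, hh, hexp⟩ := exists_differentiableOn_exp_eq_of_ne_zero
    (hf.comp (differentiableOn_halfPlaneToSector.comp differentiableOn_cayley mapsTo_cayley) hT)
    fun ζ hζ ↦ norm_pos_iff.1 (hM.trans_le (hlb _ (hT hζ)))
  have hnorm : ∀ ζ ∈ ball (0 : ℂ) 1, ‖f (T ζ)‖ = Real.exp (h ζ).re := fun ζ hζ ↦ by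
    rw [← norm_exp, hexp ζ hζ, Function.comp_apply]
  have hre : ∀ ζ ∈ ball (0 : ℂ) 1, Real.log M ≤ (h ζ).re := fun ζ hζ ↦ by
    rw [← Real.log_exp (h ζ).re, ← hnorm ζ hζ]
    exact Real.log_le_log hM (hlb _ (hT hζ))
  obtain ⟨c, hc, hpre⟩ := exists_halfPlaneToSector_eq_of_mem_sector (α := α) (β := β) hε
  set C := 2 * (|Real.log M| + 1 + ‖h 0‖)
  refine ⟨C * c, 1, by positivity, one_pos, ?_⟩
  intro z hz hz1
  obtain ⟨w, hw, rfl, hwc⟩ := hpre z hz hz1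
  obtain ⟨ζ, hζ, rfl, hζw⟩ := exists_cayley_eq hw
  calc ‖f (T ζ)‖ = Real.exp (h ζ).re := hnorm ζ hζ
    _ ≤ Real.exp (C * (1 - ‖ζ‖)⁻¹) := by
      gcongr
      calc (h ζ).re ≤ ‖h ζ‖ := re_le_norm _
        _ ≤ C * 1 / (1 - ‖ζ‖) := norm_le_of_le_re_of_mem_ball hh hre hζ
        _ = C * (1 - ‖ζ‖)⁻¹ := by ring
    _ ≤ 1 * Real.exp (C * c * ‖T ζ‖ ^ (π / (β - α))) := by
      rw [one_mul, mul_assoc C]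
      gcongr Real.exp (C * ?_)
      exact hζw.trans hwc

/-- A holomorphic function bounded below in modulus on a sector of opening `β - α`
grows at most like `exp (A |z|^κ)`, `κ = π/(β-α)`, in every smaller subsector. -/
theorem stmt_11 (α β : ℝ) (hab : α < β) (h2π : β - α ≤ 2 * π)
    (f : ℂ → ℂ) (hf : DifferentiableOn ℂ f (sector α β))
    (M : ℝ) (hM : 0 < M) (hlb : ∀ z ∈ sector α β, M ≤ ‖f z‖) :
    ∀ ε : ℝ, 0 < ε → ∃ A B : ℝ, 0 < A ∧ 0 < B ∧
      ∀ z ∈ sector (α + ε) (β - ε), 1 ≤ ‖z‖ →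
        ‖f z‖ ≤ B * Real.exp (A * ‖z‖ ^ (π / (β - α))) :=
  stmt_11_general α β hab f hf M hM hlb
end
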